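/- arXiv:2602.08712 — 3 statements merged into one kernel-verified Lean document; each statement's English description precedes it below -/
import Mathlib

section
/- For every natural number N ≥ 1 and every real number λ > 0, the matrix A_N(λ) has a strictly positive real eigenvalue if and only if λ > λ_c(N). -/
/-!
Since `A_N(λ) = λ C_N - 1`, the spectrum of `A_N(λ)` is `{λμ - 1 | μ ∈ σ(C_N)}`, and
`det(-A_N(λ)) = 0` exactly when `1/λ ∈ σ(C_N)`. Hence, if `M` is the largest eigenvalue of `C_N`
and `M > 0`, then `λ_c(N) = 1/M` and `A_N(λ)` has a positive eigenvalue iff `λM > 1`.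
Positivity of `M` for `N ≥ 1` comes from the explicit eigenvector `j ↦ cos (jθ)`,
`θ = π / (2(N+1))`, with eigenvalue `2 cos θ > 0`: the rows of `C_N` are the recurrence
`cos ((j-1)θ) + cos ((j+1)θ) = 2 cos θ cos (jθ)`, and the boundary rows hold because
`cos (-θ) = cos θ` and `cos ((N+1)θ) = 0`.
-/

open Matrix Polynomial Filter

/-- The (N+1)×(N+1) matrix A_N(λ): diagonal −1, entry (0,1) equal to 2λ,
entries λ on the other super/sub-diagonal positions, 0 elsewhere. -/
noncomputable def matA (lam : ℝ) (N : ℕ) : Matrix (Fin (N + 1)) (Fin (N + 1)) ℝ :=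
  Matrix.of fun j k =>
    if j = k then -1
    else if (j : ℕ) = 0 ∧ (k : ℕ) = 1 then 2 * lam
    else if (j : ℕ) + 1 = (k : ℕ) ∨ (k : ℕ) + 1 = (j : ℕ) then lam
    else 0

/-- The (N+1)×(N+1) matrix C_N: zero diagonal, entry (0,1) equal to 2,
entries 1 on the other super/sub-diagonal positions, 0 elsewhere;
so that A_N(λ) = −I + λ·C_N. -/
noncomputable def matC (N : ℕ) : Matrix (Fin (N + 1)) (Fin (N + 1)) ℝ :=
  Matrix.of fun j k =>
    if j = k then 0
    else if (j : ℕ) = 0 ∧ (k : ℕ) = 1 then 2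
    else if (j : ℕ) + 1 = (k : ℕ) ∨ (k : ℕ) + 1 = (j : ℕ) then 1
    else 0

/-- The critical value λ_c(N) = inf {λ > 0 : det(−A_N(λ)) = 0}. -/
noncomputable def lamCrit (N : ℕ) : ℝ :=
  sInf {lam : ℝ | 0 < lam ∧ (-(matA lam N)).det = 0}

theorem spectrum.mem_smul_sub_one_iff {𝕜 A : Type*} [Field 𝕜] [Ring A] [Algebra 𝕜 A] {l : 𝕜}
    (hl : l ≠ 0) (a : A) (x : 𝕜) :
    x ∈ spectrum 𝕜 (l • a - 1) ↔ (x + 1) / l ∈ spectrum 𝕜 a := by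
  have hshift : algebraMap 𝕜 A x - (l • a - 1) = algebraMap 𝕜 A (x + 1) - l • a := by
    rw [map_add, map_one]; abel
  have hscale := spectrum.smul_mem_smul_iff (a := a) (s := (x + 1) / l) (r := Units.mk0 l hl)
  change l * ((x + 1) / l) ∈ _ ↔ _ at hscale
  rw [mul_div_cancel₀ _ hl] at hscale
  rw [spectrum.mem_iff, hshift, ← spectrum.mem_iff]
  exact hscale

section ShiftedSpectrum

variable {A : Type*} [Ring A] [Algebra ℝ A] {a : A} {M : ℝ}

theorem isLeast_zero_mem_spectrum_smul_sub_one (hM : IsGreatest (spectrum ℝ a) M) (hM0 : 0 < M) :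
    IsLeast {l : ℝ | 0 < l ∧ 0 ∈ spectrum ℝ (l • a - 1)} M⁻¹ := by
  have hzero : ∀ l : ℝ, 0 < l → (0 ∈ spectrum ℝ (l • a - 1) ↔ l⁻¹ ∈ spectrum ℝ a) := fun l hl => by
    rw [spectrum.mem_smul_sub_one_iff hl.ne', zero_add, one_div]
  refine ⟨⟨inv_pos.mpr hM0, (hzero _ (inv_pos.mpr hM0)).mpr ((inv_inv M).symm ▸ hM.1)⟩, ?_⟩
  rintro l ⟨hl, h0⟩
  exact inv_le_of_inv_le₀ hl (hM.2 ((hzero l hl).mp h0))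

theorem exists_pos_mem_spectrum_smul_sub_one_iff (hM : IsGreatest (spectrum ℝ a) M) (hM0 : 0 < M)
    {lam : ℝ} (hlam : 0 < lam) : (∃ x ∈ spectrum ℝ (lam • a - 1), 0 < x) ↔ M⁻¹ < lam := by
  simp_rw [spectrum.mem_smul_sub_one_iff hlam.ne', inv_lt_iff_one_lt_mul₀ hM0]
  constructor
  · rintro ⟨x, hx, hx0⟩
    have hle := (div_le_iff₀ hlam).mp (hM.2 hx)
    linarith
  · intro h
    refine ⟨lam * M - 1, ?_, by linarith⟩
    rw [sub_add_cancel, mul_div_cancel_left₀ _ hlam.ne']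
    exact hM.1

end ShiftedSpectrum

theorem Matrix.det_neg_eq_zero_iff_zero_mem_spectrum {n K : Type*} [Fintype n] [DecidableEq n]
    [Field K] (M : Matrix n n K) : (-M).det = 0 ↔ 0 ∈ spectrum K M := by
  rw [spectrum.zero_mem_iff, ← IsUnit.neg_iff, Matrix.isUnit_iff_isUnit_det, isUnit_iff_ne_zero,
    not_not]

theorem Matrix.mem_spectrum_of_mulVec_eq {n K : Type*} [Fintype n] [DecidableEq n] [Field K]
    {M : Matrix n n K} {v : n → K} {μ : K} (hv : v ≠ 0) (h : M *ᵥ v = μ • v) :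
    μ ∈ spectrum K M := by
  rw [spectrum.mem_iff, Matrix.isUnit_iff_isUnit_det, isUnit_iff_ne_zero, not_not,
    ← Matrix.exists_mulVec_eq_zero_iff]
  exact ⟨v, hv, by rw [Matrix.sub_mulVec, h, Algebra.algebraMap_eq_smul_one, Matrix.smul_mulVec,
    Matrix.one_mulVec, sub_self]⟩

theorem matA_eq_smul_sub_one (lam : ℝ) (N : ℕ) : matA lam N = lam • matC N - 1 := by
  ext j k
  simp only [matA, matC, Matrix.of_apply, Matrix.sub_apply, Matrix.smul_apply,
    Matrix.one_apply, smul_eq_mul]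
  split_ifs <;> ring

theorem matC_mulVec_apply (N : ℕ) (v : ℕ → ℝ) (hv : v (N + 1) = 0) (j : Fin (N + 1)) :
    (matC N *ᵥ fun k => v k) j = if (j : ℕ) = 0 then 2 * v 1 else v (j - 1) + v (j + 1) := by
  obtain ⟨j, hj⟩ := j
  have hsum : (matC N *ᵥ fun k => v k) ⟨j, hj⟩ = ∑ k ∈ Finset.range (N + 2),
      ((if k = j + 1 then (if j = 0 then (2 : ℝ) else 1) else 0) +
        (if k + 1 = j then (1 : ℝ) else 0)) * v k := by
    rw [Finset.sum_range_succ, hv, mul_zero, add_zero, ← Fin.sum_univ_eq_sum_range, Matrix.mulVec,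
      dotProduct]
    refine Finset.sum_congr rfl fun k _ => ?_
    simp only [matC, Matrix.of_apply, Fin.ext_iff]
    split_ifs <;> first | omega | simp
  rw [hsum]
  simp only [add_mul, Finset.sum_add_distrib, ite_mul, zero_mul, Finset.sum_ite_eq']
  rw [if_pos (Finset.mem_range.mpr (by omega))]
  rcases j with _ | i
  · simp
  · simp [Finset.mem_range.mpr (show i < N + 2 by omega), add_comm]

open Real in
theorem matC_mulVec_cos (N : ℕ) {θ : ℝ} (hθ : cos ((N + 1) * θ) = 0) :
    (matC N *ᵥ fun k : Fin (N + 1) => cos (k * θ)) =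
      (2 * cos θ) • fun k : Fin (N + 1) => cos (k * θ) := by
  funext j
  rw [matC_mulVec_apply N (fun k => cos (k * θ)) (by push_cast; exact hθ)]
  rcases Nat.eq_zero_or_pos j with hj | hj
  · simp [hj]
  · rw [if_neg hj.ne', Nat.cast_sub hj, Pi.smul_apply, smul_eq_mul]
    push_cast
    set x : ℝ := ((j : ℕ) : ℝ)
    rw [cos_add_cos, show ((x - 1) * θ + (x + 1) * θ) / 2 = x * θ by ring,
      show ((x - 1) * θ - (x + 1) * θ) / 2 = -θ by ring, cos_neg, mul_right_comm]

open Real in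
theorem exists_pos_mem_spectrum_matC {N : ℕ} (hN : 1 ≤ N) :
    ∃ μ ∈ spectrum ℝ (matC N), 0 < μ := by
  set θ := π / (2 * (N + 1)) with hθ_def
  have hθ : cos ((N + 1) * θ) = 0 := by
    rw [show ((N : ℝ) + 1) * θ = π / 2 by rw [hθ_def]; field_simp, cos_pi_div_two]
  have hθ_lt : θ < π / 2 := by
    apply div_lt_div_of_pos_left pi_pos (by norm_num)
    have : (1 : ℝ) ≤ N := by exact_mod_cast hN
    linarith
  refine ⟨2 * cos θ, Matrix.mem_spectrum_of_mulVec_eq ?_ (matC_mulVec_cos N hθ), ?_⟩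
  · exact fun h => by simpa using congrFun h 0
  · have : 0 < cos θ := cos_pos_of_mem_Ioo ⟨by linarith [show 0 < θ by positivity], hθ_lt⟩
    positivity

theorem lamCrit_eq_inv {N : ℕ} {M : ℝ} (hM : IsGreatest (spectrum ℝ (matC N)) M) (hM0 : 0 < M) :
    lamCrit N = M⁻¹ := by
  have hset : {lam : ℝ | 0 < lam ∧ (-(matA lam N)).det = 0} =
      {l : ℝ | 0 < l ∧ 0 ∈ spectrum ℝ (l • matC N - 1)} := by
    simp_rw [Matrix.det_neg_eq_zero_iff_zero_mem_spectrum, matA_eq_smul_sub_one]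
  rw [lamCrit, hset]
  exact (isLeast_zero_mem_spectrum_smul_sub_one hM hM0).csInf_eq

/-- For N ≥ 1 and λ > 0, the matrix A_N(λ) has a strictly positive real
eigenvalue if and only if λ > λ_c(N). -/
theorem pos_eigenvalue_iff (N : ℕ) (hN : 1 ≤ N) (lam : ℝ) (hlam : 0 < lam) :
    (∃ x ∈ spectrum ℝ (matA lam N), 0 < x) ↔ lamCrit N < lam := by
  obtain ⟨μ, hμ, hμ0⟩ := exists_pos_mem_spectrum_matC hN
  obtain ⟨M, hM⟩ := (Matrix.finite_spectrum (matC N)).isCompact.exists_isGreatest ⟨μ, hμ⟩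
  have hM0 : 0 < M := hμ0.trans_le (hM.2 hμ)
  rw [lamCrit_eq_inv hM hM0, matA_eq_smul_sub_one,
    exists_pos_mem_spectrum_smul_sub_one_iff hM hM0 hlam]
end

section
/- The critical value is nonincreasing in N: for every natural number N ≥ 1, λ_c(N+1) ≤ λ_c(N). -/
open Matrix Polynomial Filter

/-! The vector `w j = cos (j θ)` satisfies `matC N *ᵥ w = 2 cos θ • w` except in the last row,
where `cos ((N + 1) θ)` is missing. For `θ = π / (2N + 2)` that term vanishes, so `w` is a null
vector of `1 - λ • matC N` at `λ = 1 / (2 cos θ)`. For `0 < λ < 1 / (2 cos θ)` the same `w` is a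
positive vector with `λ • matC N *ᵥ w < w`; scaling the columns by `w` then makes `1 - λ • matC N`
strictly diagonally dominant, hence nonsingular. So `λ_c(N) = 1 / (2 cos (π / (2N + 2)))`, which
decreases with `N`. -/

open Real

theorem Matrix.det_one_sub_ne_zero_of_mulVec_lt {ι : Type*} [Fintype ι] [DecidableEq ι]
    {B : Matrix ι ι ℝ} (hB : ∀ i j, 0 ≤ B i j) {w : ι → ℝ} (hw : ∀ i, 0 ≤ w i)
    (hBw : ∀ i, (B *ᵥ w) i < w i) : (1 - B).det ≠ 0 := by
  suffices ((1 - B) * diagonal w).det ≠ 0 by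
    rw [det_mul] at this; exact left_ne_zero_of_mul this
  refine det_ne_zero_of_sum_row_lt_diag fun i => ?_
  have hoff : ∀ j ∈ Finset.univ.erase i, ‖((1 - B) * diagonal w) i j‖ = B i j * w j := by
    intro j hj
    rw [mul_diagonal, Matrix.sub_apply, one_apply_ne (Finset.ne_of_mem_erase hj).symm, zero_sub,
      neg_mul, norm_neg, Real.norm_of_nonneg (mul_nonneg (hB i j) (hw j))]
  have hrow : ∑ j ∈ Finset.univ.erase i, B i j * w j = (B *ᵥ w) i - B i i * w i := by
    rw [mulVec, dotProduct, ← Finset.add_sum_erase _ _ (Finset.mem_univ i)]; ring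
  rw [Finset.sum_congr rfl hoff, hrow, mul_diagonal, Matrix.sub_apply, one_apply_eq]
  calc (B *ᵥ w) i - B i i * w i < (1 - B i i) * w i := by linarith [hBw i]
    _ ≤ ‖(1 - B i i) * w i‖ := le_norm_self _

theorem neg_matA_eq_one_sub_smul_matC (lam : ℝ) (N : ℕ) : -matA lam N = 1 - lam • matC N := by
  ext j k
  simp only [matA, matC, Matrix.neg_apply, Matrix.sub_apply, one_apply, Matrix.smul_apply,
    of_apply, smul_eq_mul]
  split_ifs <;> ring

theorem matC_apply {N : ℕ} (j k : Fin (N + 1)) :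
    matC N j k = (if (k : ℕ) = j + 1 then (if (j : ℕ) = 0 then 2 else 1) else 0) +
      (if (j : ℕ) = k + 1 then 1 else 0) := by
  simp only [matC, of_apply, Fin.ext_iff]
  split_ifs <;> first | omega | norm_num

noncomputable def cosVec (θ : ℝ) (N : ℕ) : Fin (N + 1) → ℝ := fun j => cos (j * θ)

theorem matC_mulVec_cosVec {N : ℕ} (hN : 1 ≤ N) (θ : ℝ) (j : Fin (N + 1)) :
    (matC N *ᵥ cosVec θ N) j =
      2 * cos θ * cosVec θ N j - if (j : ℕ) = N then cos ((N + 1) * θ) else 0 := by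
  simp only [mulVec, dotProduct, matC_apply, cosVec, add_mul, Finset.sum_add_distrib]
  rw [Fin.sum_univ_eq_sum_range (fun k : ℕ =>
      (if k = (j : ℕ) + 1 then (if (j : ℕ) = 0 then (2 : ℝ) else 1) else 0) * cos (k * θ)),
    Fin.sum_univ_eq_sum_range (fun k : ℕ =>
      (if (j : ℕ) = k + 1 then (1 : ℝ) else 0) * cos (k * θ))]
  simp only [ite_mul, zero_mul, Finset.sum_ite_eq', Finset.mem_range]
  obtain ⟨j, hj⟩ := j
  cases j with
  | zero =>
    simp [show 0 < N by omega, show 0 ≠ N by omega]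
  | succ i =>
    have hrec := two_mul_cos_mul_cos ((i + 1) * θ) θ
    simp only [Nat.add_right_cancel_iff, Finset.sum_ite_eq, Finset.mem_range,
      show i < N + 1 by omega, Nat.add_one_ne_zero, if_true, if_false, one_mul]
    rcases Nat.lt_or_eq_of_le (Nat.le_of_lt_succ hj) with hi | rfl
    · simp only [show i + 1 + 1 < N + 1 by omega, show i + 1 ≠ N by omega, if_true, if_false]
      push_cast; ring_nf at hrec ⊢; linarith
    · simp only [lt_self_iff_false, if_true, if_false]
      push_cast; ring_nf at hrec ⊢; linarith

theorem matC_nonneg (N : ℕ) (j k : Fin (N + 1)) : 0 ≤ matC N j k := by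
  rw [matC_apply]; split_ifs <;> norm_num

theorem cosVec_pos {θ : ℝ} {N : ℕ} (hθ : 0 < θ) (hNθ : (N + 1) * θ ≤ π / 2) (j : Fin (N + 1)) :
    0 < cosVec θ N j := by
  have hj : (j : ℝ) < N + 1 := by exact_mod_cast j.isLt
  refine cos_pos_of_mem_Ioo ⟨by nlinarith [pi_pos, (j : ℕ).cast_nonneg (α := ℝ)], ?_⟩
  calc (j : ℝ) * θ < (N + 1) * θ := by gcongr
    _ ≤ π / 2 := hNθ

theorem cos_pos_of_succ_mul_le {N : ℕ} (hN : 1 ≤ N) {θ : ℝ} (hθ : 0 < θ)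
    (hNθ : (N + 1) * θ ≤ π / 2) : 0 < cos θ := by
  have : (2 : ℝ) ≤ N + 1 := by norm_cast; omega
  exact cos_pos_of_mem_Ioo ⟨by linarith [pi_pos], by nlinarith⟩

theorem succ_mul_pi_div (N : ℕ) : ((N : ℝ) + 1) * (π / (2 * N + 2)) = π / 2 := by
  field_simp

theorem det_neg_matA_eq_one_sub_smul_matC_zero {N : ℕ} (hN : 1 ≤ N) :
    (-matA (1 / (2 * cos (π / (2 * N + 2)))) N).det = 0 := by
  set θ := π / (2 * N + 2)
  have hcos : 0 < cos θ := cos_pos_of_succ_mul_le hN (by positivity) (succ_mul_pi_div N).le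
  have hlast : cos ((N + 1) * θ) = 0 := by rw [succ_mul_pi_div, cos_pi_div_two]
  rw [neg_matA_eq_one_sub_smul_matC, ← exists_mulVec_eq_zero_iff]
  refine ⟨cosVec θ N, fun h => by simpa [cosVec] using congrFun h 0, ?_⟩
  ext j
  simp only [sub_mulVec, one_mulVec, smul_mulVec, Pi.sub_apply, Pi.smul_apply, smul_eq_mul,
    matC_mulVec_cosVec hN, hlast, ite_self, sub_zero, Pi.zero_apply]
  field_simp
  ring

theorem det_neg_matA_ne_zero {N : ℕ} (hN : 1 ≤ N) {θ lam : ℝ} (hθ : 0 < θ)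
    (hNθ : (N + 1) * θ ≤ π / 2) (hlam : 0 ≤ lam) (hlt : 2 * lam * cos θ < 1) :
    (-matA lam N).det ≠ 0 := by
  have hw := cosVec_pos hθ hNθ
  have hlast : 0 ≤ cos ((N + 1) * θ) :=
    cos_nonneg_of_mem_Icc ⟨by nlinarith [pi_pos], hNθ⟩
  rw [neg_matA_eq_one_sub_smul_matC]
  refine det_one_sub_ne_zero_of_mulVec_lt (fun i j => mul_nonneg hlam (matC_nonneg N i j))
    (fun j => (hw j).le) fun j => ?_
  rw [smul_mulVec, Pi.smul_apply, smul_eq_mul, matC_mulVec_cosVec hN]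
  have : 0 ≤ if (j : ℕ) = N then cos ((N + 1) * θ) else 0 := by split_ifs <;> simp [hlast]
  nlinarith [hw j]

theorem lamCrit_eq {N : ℕ} (hN : 1 ≤ N) : lamCrit N = 1 / (2 * cos (π / (2 * N + 2))) := by
  have hθ : 0 < π / (2 * N + 2) := by positivity
  have hcos := cos_pos_of_succ_mul_le hN hθ (succ_mul_pi_div N).le
  refine le_antisymm (csInf_le ⟨0, fun _ h => h.1.le⟩ ⟨by positivity, det_neg_matA_eq_one_sub_smul_matC_zero hN⟩)
    (le_csInf ⟨_, by positivity, det_neg_matA_eq_one_sub_smul_matC_zero hN⟩ fun lam ⟨hlam, hdet⟩ => ?_)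
  by_contra! hlt
  rw [lt_div_iff₀ (by positivity)] at hlt
  exact det_neg_matA_ne_zero hN hθ (succ_mul_pi_div N).le hlam.le (by linarith) hdet

/-- The critical value is nonincreasing in N: λ_c(N+1) ≤ λ_c(N) for N ≥ 1. -/
theorem lamCrit_antitone (N : ℕ) (hN : 1 ≤ N) : lamCrit (N + 1) ≤ lamCrit N := by
  rw [lamCrit_eq (by omega), lamCrit_eq hN]
  have hθ : 0 < π / (2 * N + 2) := by positivity
  have hcos := cos_pos_of_succ_mul_le hN hθ (succ_mul_pi_div N).le
  gcongr
  apply cos_le_cos_of_nonneg_of_le_pi (by positivity)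
  · exact div_le_self pi_pos.le (by linarith)
  · push_cast
    exact div_le_div_of_nonneg_left pi_pos.le (by positivity) (by linarith)
end

section
/- (Spectral form of Theorem 1.) For every real number λ with 1/2 < λ ≤ √2/2, there exists a natural number N_c ≥ 2 such that λ > λ_c(N) for all N ≥ N_c and λ ≤ λ_c(N) for all N with 1 ≤ N < N_c; consequently the branching random walk restricted to I_N with birth rate λ survives with positive probability exactly when N ≥ N_c. -/
open Matrix Polynomial Filter

noncomputable def ent (lam : ℝ) (j k : ℕ) : ℝ :=
  if j = k then 1
  else if j = 0 ∧ k = 1 then -(2 * lam)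
  else if j + 1 = k ∨ k + 1 = j then -lam
  else 0

lemma negA_apply (lam : ℝ) (N : ℕ) (j k : Fin (N+1)) :
    (-(matA lam N)) j k = ent lam (j : ℕ) (k : ℕ) := by
  simp only [Matrix.neg_apply, matA, Matrix.of_apply, ent, Fin.ext_iff]
  split_ifs <;> ring

lemma ent_eq_zero (lam : ℝ) {j k : ℕ} (h1 : j ≠ k) (h2 : ¬(j = 0 ∧ k = 1))
    (h3 : ¬(j + 1 = k ∨ k + 1 = j)) : ent lam j k = 0 := by
  unfold ent; rw [if_neg h1, if_neg h2, if_neg h3]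

lemma succAbove_val {n : ℕ} (p : Fin (n+1)) (i : Fin n) :
    ((p.succAbove i) : ℕ) = if (i:ℕ) < (p:ℕ) then (i:ℕ) else (i:ℕ)+1 := by
  rw [Fin.succAbove]
  split_ifs with h1 h2 h2
  · simp
  · exact absurd (by simpa [Fin.lt_def] using h1) h2
  · exact absurd (by simpa [Fin.lt_def] using h2) h1
  · simp

lemma submatrix_eq {lam : ℝ} {N M' : ℕ} (r : Fin (M'+1) → Fin (N+1)) (c : Fin (M'+1) → Fin (N+1))
    (hr : ∀ i, ((r i) : ℕ) = (i:ℕ)) (hc : ∀ j, ((c j) : ℕ) = (j:ℕ)) :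
    (-(matA lam N)).submatrix r c = -(matA lam M') := by
  ext i j
  rw [Matrix.submatrix_apply, negA_apply, negA_apply, hr, hc]

lemma det_step (lam : ℝ) (n : ℕ) :
    (-(matA lam (n+2))).det
      = (-(matA lam (n+1))).det - lam^2 * (-(matA lam n)).det := by
  set M : Matrix (Fin (n+3)) (Fin (n+3)) ℝ := -(matA lam (n+2)) with hM
  set a : Fin (n+3) := ⟨n+1, by omega⟩ with ha
  set b : Fin (n+3) := Fin.last (n+2) with hb
  have hb' : (b : ℕ) = n + 2 := rfl
  have hab : a ≠ b := by simp [ha, hb, Fin.ext_iff]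
  rw [Matrix.det_succ_row M b]
  have hz : ∀ j ∈ (Finset.univ : Finset (Fin (n+3))), j ∉ ({a, b} : Finset (Fin (n+3))) →
      (-1 : ℝ) ^ ((b:ℕ) + (j:ℕ)) * M b j * (M.submatrix b.succAbove j.succAbove).det = 0 := by
    intro j _ hj
    simp only [Finset.mem_insert, Finset.mem_singleton] at hj
    push_neg at hj
    have h1 : (j : ℕ) ≠ n + 1 := by
      intro h; exact hj.1 (by simp [ha, Fin.ext_iff, h])
    have h2 : (j : ℕ) ≠ n + 2 := by
      intro h; exact hj.2 (by simp [hb, Fin.ext_iff, h])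
    have : M b j = 0 := by
      rw [hM, negA_apply, hb']
      exact ent_eq_zero _ (by omega) (by omega) (by omega)
    rw [this]; ring
  rw [← Finset.sum_subset (Finset.subset_univ {a, b}) hz, Finset.sum_pair hab]
  -- values of the two entries
  have hMba : M b a = -lam := by
    rw [hM, negA_apply, hb']
    show ent lam (n+2) (n+1) = -lam
    unfold ent
    rw [if_neg (by omega), if_neg (by omega), if_pos (by omega)]
  have hMbb : M b b = 1 := by
    rw [hM, negA_apply, hb']
    show ent lam (n+2) (n+2) = 1
    unfold ent
    rw [if_pos rfl]
  -- the (b,b) minor is the matrix one size down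
  have hsubb : M.submatrix b.succAbove b.succAbove = -(matA lam (n+1)) := by
    apply submatrix_eq <;>
      · intro i
        rw [succAbove_val, if_pos (show (i:ℕ) < (b:ℕ) from i.isLt)]
  -- the (b,a) minor
  have hsubA : (M.submatrix b.succAbove a.succAbove).det = -lam * (-(matA lam n)).det := by
    set B : Matrix (Fin (n+2)) (Fin (n+2)) ℝ := M.submatrix b.succAbove a.succAbove with hB
    have hcol : ∀ i : Fin (n+2), (B i (Fin.last (n+1)) : ℝ)
        = ent lam (i:ℕ) (n+2) := by
      intro i
      rw [hB, Matrix.submatrix_apply, hM, negA_apply]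
      congr 1
      · rw [succAbove_val, if_pos (show _ < (b:ℕ) from i.isLt)]
      · have hav : (a : ℕ) = n + 1 := rfl
        rw [succAbove_val, hav, Fin.val_last, if_neg (by omega)]
    rw [Matrix.det_succ_column B (Fin.last (n+1))]
    have hz2 : ∀ i ∈ (Finset.univ : Finset (Fin (n+2))),
        i ∉ ({Fin.last (n+1)} : Finset (Fin (n+2))) →
        (-1:ℝ) ^ ((i:ℕ) + ((Fin.last (n+1) : Fin (n+2)):ℕ)) * B i (Fin.last (n+1)) *
          (B.submatrix i.succAbove (Fin.last (n+1)).succAbove).det = 0 := by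
      intro i _ hi
      simp only [Finset.mem_singleton] at hi
      have h1 : (i : ℕ) ≠ n + 1 := by
        intro h; exact hi (by simp [Fin.ext_iff, Fin.last, h])
      have h2 : (i : ℕ) < n + 2 := i.isLt
      rw [hcol, ent_eq_zero _ (by omega) (by omega) (by omega)]
      ring
    rw [← Finset.sum_subset (Finset.subset_univ {Fin.last (n+1)}) hz2,
        Finset.sum_singleton]
    have hBval : B (Fin.last (n+1)) (Fin.last (n+1)) = -lam := by
      rw [hcol]
      show ent lam (n+1) (n+2) = -lam
      unfold ent
      rw [if_neg (by omega), if_neg (by omega), if_pos (by omega)]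
    have hsub2 : B.submatrix (Fin.last (n+1)).succAbove (Fin.last (n+1)).succAbove
        = -(matA lam n) := by
      rw [hB, Matrix.submatrix_submatrix]
      have hav : (a : ℕ) = n + 1 := rfl
      apply submatrix_eq
      · intro i
        simp only [Function.comp_apply]
        rw [succAbove_val, succAbove_val, Fin.val_last, hb']
        have := i.isLt
        split_ifs <;> omega
      · intro j
        simp only [Function.comp_apply]
        rw [succAbove_val, succAbove_val, Fin.val_last, hav]
        have := j.isLt
        split_ifs <;> omega
    rw [hBval, hsub2]
    have : ((Fin.last (n+1) : Fin (n+2)) : ℕ) = n+1 := rfl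
    rw [this]
    have hpow : (-1:ℝ) ^ ((n+1) + (n+1)) = 1 := by
      rw [show (n+1) + (n+1) = 2*(n+1) from by ring, pow_mul]; simp
    rw [hpow]; ring
  have hav : (a : ℕ) = n + 1 := rfl
  rw [hMba, hMbb, hsubb, hsubA, hav, hb']
  have h1 : (-1:ℝ) ^ ((n+2) + (n+1)) = -1 := by
    have : (n+2) + (n+1) = 2*(n+1) + 1 := by ring
    rw [this, pow_succ, pow_mul]; simp
  have h2 : (-1:ℝ) ^ ((n+2) + (n+2)) = 1 := by
    have : (n+2) + (n+2) = 2*(n+2) := by ring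
    rw [this, pow_mul]; simp
  rw [h1, h2]; ring

noncomputable def Dseq (lam : ℝ) : ℕ → ℝ
  | 0 => 1
  | 1 => 1 - 2 * lam ^ 2
  | (n+2) => Dseq lam (n+1) - lam ^ 2 * Dseq lam n

lemma det_negA (lam : ℝ) : ∀ N : ℕ, (-(matA lam N)).det = Dseq lam N := by
  have h0 : (-(matA lam 0)).det = Dseq lam 0 := by
    rw [Matrix.det_fin_one, negA_apply]
    show ent lam 0 0 = 1
    unfold ent; rw [if_pos rfl]
  have h1 : (-(matA lam 1)).det = Dseq lam 1 := by
    rw [Matrix.det_fin_two, negA_apply, negA_apply, negA_apply, negA_apply]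
    show ent lam 0 0 * ent lam 1 1 - ent lam 0 1 * ent lam 1 0 = 1 - 2 * lam ^ 2
    unfold ent
    norm_num
    ring
  intro N
  induction N using Nat.twoStepInduction with
  | zero => exact h0
  | one => exact h1
  | more n ih1 ih2 => rw [det_step, ih2, ih1]; rfl

lemma Dseq_pos (lam : ℝ) (h0 : 0 < lam) (h : lam ≤ 1/2) :
    ∀ n, 0 < Dseq lam n ∧ Dseq lam n ≤ 2 * Dseq lam (n+1) := by
  have hsq : lam ^ 2 ≤ 1/4 := by nlinarith
  intro n
  induction n with
  | zero =>
    constructor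
    · norm_num [Dseq]
    · show (1:ℝ) ≤ 2 * (1 - 2 * lam ^ 2); nlinarith
  | succ n ih =>
    obtain ⟨hp, hle⟩ := ih
    have hp1 : 0 < Dseq lam (n+1) := by linarith
    refine ⟨hp1, ?_⟩
    show Dseq lam (n+1) ≤ 2 * (Dseq lam (n+1) - lam ^ 2 * Dseq lam n)
    nlinarith

lemma Dseq_closed (lam : ℝ) (h : 1/2 < lam) (n : ℕ) :
    Dseq lam n * Real.cos (Real.arccos (1/(2*lam)))
      = lam ^ n * Real.cos ((n+1) * Real.arccos (1/(2*lam))) := by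
  have hl0 : (0:ℝ) < lam := by linarith
  set θ := Real.arccos (1/(2*lam)) with hθ
  have hcos : Real.cos θ = 1/(2*lam) := by
    apply Real.cos_arccos
    · have : (0:ℝ) < 1/(2*lam) := by positivity
      linarith
    · rw [div_le_one (by linarith)]; linarith
  induction n using Nat.twoStepInduction with
  | zero => simp [Dseq]
  | one =>
    show (1 - 2*lam^2) * Real.cos θ = lam ^ 1 * Real.cos (((1:ℕ)+1) * θ)
    push_cast
    rw [show ((1:ℝ)+1) * θ = 2*θ from by ring, Real.cos_two_mul, hcos]
    field_simp
  | more n ih1 ih2 =>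
    show (Dseq lam (n+1) - lam^2 * Dseq lam n) * Real.cos θ
      = lam ^ (n+2) * Real.cos (((n+2:ℕ)+1) * θ)
    have key : Real.cos (((n+2:ℕ)+1) * θ) + Real.cos (((n:ℕ)+1) * θ)
        = 2 * Real.cos (((n+1:ℕ)+1) * θ) * Real.cos θ := by
      have h1 : ((n+2:ℕ)+1 : ℝ) * θ = ((n+1:ℕ)+1 : ℝ) * θ + θ := by push_cast; ring
      have h2 : ((n:ℕ)+1 : ℝ) * θ = ((n+1:ℕ)+1 : ℝ) * θ - θ := by push_cast; ring
      rw [h1, h2, Real.cos_add, Real.cos_sub]; ring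
    have hlam : 2 * lam * Real.cos θ = 1 := by rw [hcos]; field_simp
    have e1 : lam ^ (n+2) * Real.cos (((n+2:ℕ)+1) * θ)
        = lam ^ (n+1) * Real.cos (((n+1:ℕ)+1) * θ) * (2 * lam * Real.cos θ)
          - lam^2 * (lam ^ n * Real.cos (((n:ℕ)+1) * θ)) := by
      rw [show lam ^ (n+1) * Real.cos (((n+1:ℕ)+1) * θ) * (2 * lam * Real.cos θ)
          = lam ^ (n+2) * (2 * Real.cos (((n+1:ℕ)+1) * θ) * Real.cos θ) from by ring,
        ← key]
      ring
    rw [e1, hlam, ← ih2, ← ih1]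
    ring

noncomputable def fC (N : ℕ) : ℝ := 1/(2 * Real.cos (Real.pi/(2*(N+1))))

lemma alpha_pos (N : ℕ) : 0 < Real.pi/(2*(N+1)) := by
  apply div_pos Real.pi_pos; positivity

lemma alpha_lt (N : ℕ) (hN : 1 ≤ N) : Real.pi/(2*(N+1)) ≤ Real.pi/4 := by
  apply div_le_div_of_nonneg_left Real.pi_pos.le (by norm_num)
  have : (1:ℝ) ≤ (N:ℝ) := by exact_mod_cast hN
  linarith

lemma cos_alpha_pos (N : ℕ) (hN : 1 ≤ N) : 0 < Real.cos (Real.pi/(2*(N+1))) := by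
  apply Real.cos_pos_of_mem_Ioo
  constructor
  · have := alpha_pos N; linarith [Real.pi_pos]
  · calc Real.pi/(2*(N+1)) ≤ Real.pi/4 := alpha_lt N hN
      _ < Real.pi/2 := by linarith [Real.pi_pos]

lemma cos_alpha_lt_one (N : ℕ) (hN : 1 ≤ N) : Real.cos (Real.pi/(2*(N+1))) < 1 := by
  have h1 := alpha_pos N
  have h2 := alpha_lt N hN
  have hpi := Real.pi_pos
  have := Real.strictAntiOn_cos (Set.mem_Icc.2 ⟨le_refl 0, hpi.le⟩)
    (Set.mem_Icc.2 ⟨h1.le, by linarith⟩) h1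
  simpa [Real.cos_zero] using this

lemma fC_gt_half (N : ℕ) (hN : 1 ≤ N) : 1/2 < fC N := by
  rw [fC]
  have hc := cos_alpha_pos N hN
  rw [div_lt_div_iff₀ (by norm_num) (by linarith)]
  have := cos_alpha_lt_one N hN
  linarith

lemma fC_pos (N : ℕ) (hN : 1 ≤ N) : 0 < fC N := by
  have := fC_gt_half N hN; linarith

lemma Dseq_fC_zero (N : ℕ) (hN : 1 ≤ N) : Dseq (fC N) N = 0 := by
  set α := Real.pi/(2*(N+1)) with hα
  have hc := cos_alpha_pos N hN
  have harc : Real.arccos (1/(2 * fC N)) = α := by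
    rw [fC]
    rw [show 1/(2 * (1/(2 * Real.cos α))) = Real.cos α from by field_simp]
    apply Real.arccos_cos (alpha_pos N).le
    have h1 := alpha_lt N hN
    have := Real.pi_pos
    linarith
  have hclosed := Dseq_closed (fC N) (fC_gt_half N hN) N
  rw [harc] at hclosed
  have hcosN : Real.cos (((N:ℝ)+1) * α) = 0 := by
    rw [show ((N:ℝ)+1) * α = Real.pi/2 from by rw [hα]; field_simp]
    exact Real.cos_pi_div_two
  rw [hcosN, mul_zero] at hclosed
  have := hc
  nlinarith [hclosed]

lemma Dseq_zero_ge_fC (N : ℕ) (hN : 1 ≤ N) (lam : ℝ) (hl : 0 < lam)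
    (hz : Dseq lam N = 0) : fC N ≤ lam := by
  by_contra hlt
  push_neg at hlt
  -- first, lam > 1/2
  have hhalf : 1/2 < lam := by
    by_contra hle
    push_neg at hle
    have := (Dseq_pos lam hl hle N).1
    linarith
  set θ := Real.arccos (1/(2*lam)) with hθ
  have ht1 : 1/(2*lam) < 1 := by rw [div_lt_one (by linarith)]; linarith
  have ht0 : 0 < 1/(2*lam) := by positivity
  have hθpos : 0 < θ := Real.arccos_pos.2 ht1
  have hclosed := Dseq_closed lam hhalf N
  rw [hz, zero_mul] at hclosed
  have hlamN : lam ^ N ≠ 0 := pow_ne_zero _ (ne_of_gt hl)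
  have hcosz : Real.cos (((N:ℝ)+1) * θ) = 0 := by
    rcases mul_eq_zero.1 hclosed.symm with h | h
    · exact absurd h hlamN
    · exact h
  obtain ⟨k, hk⟩ := Real.cos_eq_zero_iff.1 hcosz
  have hNpos : (0:ℝ) < (N:ℝ) + 1 := by positivity
  have hkpos : (0:ℤ) ≤ k := by
    by_contra hk0
    push_neg at hk0
    have : (k:ℝ) ≤ -1 := by exact_mod_cast (by omega : k ≤ -1)
    have h1 : ((N:ℝ)+1) * θ > 0 := by positivity
    rw [hk] at h1
    nlinarith [Real.pi_pos]
  have hge : Real.pi/2 ≤ ((N:ℝ)+1) * θ := by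
    rw [hk]
    have : (0:ℝ) ≤ (k:ℝ) := by exact_mod_cast hkpos
    nlinarith [Real.pi_pos]
  have hθge : Real.pi/(2*(N+1)) ≤ θ := by
    rw [div_le_iff₀ (by positivity)]
    calc Real.pi = (Real.pi/2) * 2 := by ring
      _ ≤ (((N:ℝ)+1) * θ) * 2 := by linarith
      _ = θ * (2*((N:ℝ)+1)) := by ring
  -- cos θ ≤ cos α
  have hcosle : Real.cos θ ≤ Real.cos (Real.pi/(2*(N+1))) := by
    apply Real.cos_le_cos_of_nonneg_of_le_pi (alpha_pos N).le (Real.arccos_le_pi _) hθge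
  rw [hθ, Real.cos_arccos (by linarith) ht1.le] at hcosle
  have hc := cos_alpha_pos N hN
  rw [fC] at hlt
  rw [div_le_iff₀ (by linarith)] at hcosle
  rw [lt_div_iff₀ (by linarith)] at hlt
  nlinarith

lemma lamCrit_eq_s14 (N : ℕ) (hN : 1 ≤ N) : lamCrit N = fC N := by
  have hmem : fC N ∈ {lam : ℝ | 0 < lam ∧ (-(matA lam N)).det = 0} := by
    refine ⟨fC_pos N hN, ?_⟩
    rw [det_negA]
    exact Dseq_fC_zero N hN
  have hlb : ∀ lam ∈ {lam : ℝ | 0 < lam ∧ (-(matA lam N)).det = 0}, fC N ≤ lam := by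
    rintro lam ⟨hl, hz⟩
    rw [det_negA] at hz
    exact Dseq_zero_ge_fC N hN lam hl hz
  rw [lamCrit]
  exact le_antisymm (csInf_le ⟨fC N, hlb⟩ hmem) (le_csInf ⟨fC N, hmem⟩ hlb)

lemma fC_anti {M N : ℕ} (hM : 1 ≤ M) (hMN : M ≤ N) : fC N ≤ fC M := by
  have hcM := cos_alpha_pos M hM
  have hcN := cos_alpha_pos N (le_trans hM hMN)
  rw [fC, fC, div_le_div_iff₀ (by linarith) (by linarith)]
  have hle : Real.cos (Real.pi/(2*(M+1))) ≤ Real.cos (Real.pi/(2*(N+1))) := by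
    apply Real.cos_le_cos_of_nonneg_of_le_pi (alpha_pos N).le
    · have := alpha_lt M hM
      have := Real.pi_pos
      linarith
    · apply div_le_div_of_nonneg_left Real.pi_pos.le (by positivity)
      have : (M:ℝ) ≤ (N:ℝ) := by exact_mod_cast hMN
      linarith
  linarith

lemma fC_one : fC 1 = Real.sqrt 2 / 2 := by
  have h2 : Real.sqrt 2 * Real.sqrt 2 = 2 := Real.mul_self_sqrt (by norm_num)
  have hpos : 0 < Real.sqrt 2 := Real.sqrt_pos.2 (by norm_num)
  rw [fC, show (Real.pi/(2*((1:ℕ)+1)) : ℝ) = Real.pi/4 from by norm_num,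
    Real.cos_pi_div_four]
  rw [div_eq_div_iff (by nlinarith) (by norm_num)]
  nlinarith

/-- Spectral form of Theorem 1: for 1/2 < λ ≤ √2/2 there is N_c ≥ 2 with
λ > λ_c(N) for all N ≥ N_c and λ ≤ λ_c(N) for all 1 ≤ N < N_c; hence (by the
survival criterion) the restricted process survives exactly when N ≥ N_c. -/
theorem exists_critical_N (lam : ℝ) (h1 : 1 / 2 < lam) (h2 : lam ≤ Real.sqrt 2 / 2) :
    ∃ Nc : ℕ, 2 ≤ Nc ∧
      (∀ N : ℕ, Nc ≤ N → lamCrit N < lam) ∧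
      (∀ N : ℕ, 1 ≤ N → N < Nc → lam ≤ lamCrit N) := by
  have hl0 : 0 < lam := by linarith
  -- existence of some N with fC N < lam
  have hex : ∃ N : ℕ, 1 ≤ N ∧ fC N < lam := by
    set t : ℝ := 1/(2*lam) with htdef
    have ht1 : t < 1 := by rw [htdef, div_lt_one (by linarith)]; linarith
    have ht0 : 0 < t := by positivity
    set δ : ℝ := Real.sqrt (2*(1-t)) with hδ
    have hδ0 : 0 < δ := Real.sqrt_pos.2 (by linarith)
    obtain ⟨n, hn⟩ := exists_nat_gt (Real.pi/δ)
    refine ⟨n + 1, by omega, ?_⟩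
    set α := Real.pi/(2*((n+1:ℕ)+1)) with hα
    have hα0 := alpha_pos (n+1)
    have hαδ : α < δ := by
      rw [hα]
      rw [div_lt_iff₀ (by positivity)]
      have hn' : Real.pi/δ < (n:ℝ) := hn
      rw [div_lt_iff₀ hδ0] at hn'
      push_cast
      have : (0:ℝ) ≤ (n:ℝ) := by positivity
      nlinarith
    have hcost : t < Real.cos α := by
      have hb := Real.one_sub_sq_div_two_le_cos (x := α)
      have : α^2 < δ^2 := by nlinarith
      have hδsq : δ^2 = 2*(1-t) := Real.sq_sqrt (by linarith)
      nlinarith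
    have hc := cos_alpha_pos (n+1) (by omega)
    rw [fC]
    rw [div_lt_iff₀ (by linarith)]
    rw [htdef] at hcost
    rw [div_lt_iff₀ (by linarith)] at hcost
    nlinarith
  set Nc := Nat.find hex with hNc
  have hspec := Nat.find_spec hex
  refine ⟨Nc, ?_, ?_, ?_⟩
  · -- 2 ≤ Nc
    rcases hspec with ⟨hNc1, _⟩
    rcases Nat.lt_or_ge Nc 2 with h | h
    · interval_cases Nc
      · omega
      · exfalso
        have := (Nat.find_spec hex).2
        rw [show Nat.find hex = 1 from by omega] at this
        rw [fC_one] at this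
        linarith
    · exact h
  · intro N hN
    have hN1 : 1 ≤ N := le_trans hspec.1 hN
    rw [lamCrit_eq_s14 N hN1]
    calc fC N ≤ fC Nc := fC_anti hspec.1 hN
      _ < lam := hspec.2
  · intro N hN1 hNlt
    rw [lamCrit_eq_s14 N hN1]
    have := Nat.find_min hex hNlt
    push_neg at this
    exact this hN1
end
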